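/- There exists a constant C > 0 such that for every real z ≠ 0, |g₁(z)| ≤ C/(1+z²) and |g₂(z)| ≤ C/(1+z²). -/
import Mathlib


/-- `g₁(z) = (e^{2z} − 2z·e^z − 1)/(z²(1+e^z)²)`. -/
noncomputable def g1 (z : ℝ) : ℝ :=
  (Real.exp (2 * z) - 2 * z * Real.exp z - 1) / (z ^ 2 * (1 + Real.exp z) ^ 2)

/-- `g₂(z) = 2e^z(e^z−1)/(z(e^z+1)³)`. -/
noncomputable def g2 (z : ℝ) : ℝ :=
  2 * Real.exp z * (Real.exp z - 1) / (z * (Real.exp z + 1) ^ 3)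

set_option maxHeartbeats 1600000 in
/-- There is a constant `C > 0` with `|g₁(z)| ≤ C/(1+z²)` and `|g₂(z)| ≤ C/(1+z²)`
for every `z ≠ 0`. -/
theorem g1_g2_decay_bounds :
    ∃ C : ℝ, 0 < C ∧ ∀ z : ℝ, z ≠ 0 →
      |g1 z| ≤ C / (1 + z ^ 2) ∧ |g2 z| ≤ C / (1 + z ^ 2) := by
  refine ⟨64, by norm_num, fun z hz => ?_⟩
  have hz2 : (0:ℝ) < z ^ 2 := by positivity
  have h1z2 : (0:ℝ) < 1 + z ^ 2 := by positivity
  set E := Real.exp z with hE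
  have hEpos : 0 < E := Real.exp_pos z
  have h2z : Real.exp (2 * z) = E ^ 2 := by rw [two_mul, Real.exp_add]; ring
  have hD1 : (0:ℝ) < z ^ 2 * (1 + E) ^ 2 := by positivity
  have hzabs : 0 < |z| := abs_pos.mpr hz
  have hcube : (1:ℝ) ≤ (E + 1) ^ 3 := by nlinarith [hEpos]
  constructor
  · -- g1 bound
    rw [g1, h2z, abs_div, abs_of_pos hD1, div_le_div_iff₀ hD1 h1z2]
    rcases le_or_gt (|z|) 1 with h1 | h1
    · -- |z| ≤ 1
      have ha : |E - 1| ≤ 2 * |z| := Real.abs_exp_sub_one_le h1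
      have hb := abs_le.mp (Real.abs_exp_sub_one_sub_id_le h1)
      have hq : (E - 1) ^ 2 ≤ 4 * z ^ 2 := by
        nlinarith [mul_le_mul ha ha (abs_nonneg _) (by positivity : (0:ℝ) ≤ 2 * |z|),
          sq_abs (E - 1), sq_abs z]
      have hc : |z * (E - 1)| ≤ 2 * z ^ 2 := by
        rw [abs_mul]
        nlinarith [mul_le_mul_of_nonneg_left ha (abs_nonneg z), sq_abs z]
      obtain ⟨hc1, hc2⟩ := abs_le.mp hc
      have hid : E ^ 2 - 2 * z * E - 1
          = (E - 1) ^ 2 + 2 * (E - 1 - z) - 2 * (z * (E - 1)) := by ring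
      have hN : |E ^ 2 - 2 * z * E - 1| ≤ 10 * z ^ 2 := by
        rw [abs_le]
        constructor <;> nlinarith [sq_nonneg (E - 1), hq, hb.1, hb.2, hc1, hc2]
      have hz1 : z ^ 2 ≤ 1 := by nlinarith [sq_abs z, abs_nonneg z]
      have hp := mul_le_mul hN (by linarith : 1 + z ^ 2 ≤ 2) h1z2.le (by positivity)
      nlinarith [mul_nonneg hz2.le (by nlinarith [hEpos] : (0:ℝ) ≤ (1 + E) ^ 2 - 1)]
    · rcases le_or_gt 0 z with hzpos | hzneg
      · -- z > 1
        have h1z : 1 < z := by rwa [abs_of_nonneg hzpos] at h1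
        have hzE : z ≤ E := by linarith [Real.add_one_le_exp z]
        have hE1 : (1:ℝ) ≤ E := by linarith
        have hzE2 : z * E ≤ E * E := mul_le_mul_of_nonneg_right hzE hEpos.le
        have hEE : (1:ℝ) ≤ E * E := by nlinarith
        have hzE0 : (0:ℝ) ≤ z * E := mul_nonneg (by linarith) hEpos.le
        have hN : |E ^ 2 - 2 * z * E - 1| ≤ 4 * E ^ 2 := by
          rw [abs_le, sq]
          constructor <;> linarith
        have hp := mul_le_mul hN (by nlinarith : 1 + z ^ 2 ≤ 2 * z ^ 2) h1z2.le
          (by positivity)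
        have hEsq : E ^ 2 ≤ (1 + E) ^ 2 := by nlinarith
        have hkey : 64 * z ^ 2 * E ^ 2 ≤ 64 * (z ^ 2 * (1 + E) ^ 2) := by
          nlinarith [mul_le_mul_of_nonneg_left hEsq (by positivity : (0:ℝ) ≤ 64 * z ^ 2)]
        nlinarith [mul_nonneg hz2.le (mul_nonneg hEpos.le hEpos.le), sq (E)]
      · -- z < -1
        have hw1 : 1 < -z := by rwa [abs_of_neg hzneg] at h1
        have hexpw : (-z) + 1 ≤ Real.exp (-z) := Real.add_one_le_exp _
        have hEinv : Real.exp (-z) = E⁻¹ := Real.exp_neg z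
        have hwE : (-z) * E ≤ 1 := by
          have : (-z) * E ≤ Real.exp (-z) * E := by
            nlinarith [hEpos]
          rw [hEinv] at this
          rw [inv_mul_cancel₀ hEpos.ne'] at this
          linarith
        have hEle1 : E ≤ 1 := by
          rw [hE]
          calc Real.exp z ≤ Real.exp 0 := Real.exp_le_exp.mpr (by linarith)
            _ = 1 := Real.exp_zero
        have hEE : E * E ≤ 1 := by nlinarith
        have hN : |E ^ 2 - 2 * z * E - 1| ≤ 4 := by
          rw [abs_le, sq]
          constructor <;> nlinarith
        have hzsq : (1:ℝ) ≤ z ^ 2 := by nlinarith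
        have hp := mul_le_mul hN (by nlinarith : 1 + z ^ 2 ≤ 2 * z ^ 2) h1z2.le
          (by positivity)
        have hEsq : (1:ℝ) ≤ (1 + E) ^ 2 := by nlinarith
        have hkey : 64 * z ^ 2 ≤ 64 * (z ^ 2 * (1 + E) ^ 2) := by
          nlinarith [mul_le_mul_of_nonneg_left hEsq (by positivity : (0:ℝ) ≤ 64 * z ^ 2)]
        linarith
  · -- g2 bound
    have hD2 : (0:ℝ) < |z| * (E + 1) ^ 3 := by positivity
    have habs : |z * (E + 1) ^ 3| = |z| * (E + 1) ^ 3 := by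
      rw [abs_mul, abs_of_pos (by positivity : (0:ℝ) < (E + 1) ^ 3)]
    have hnum : |2 * E * (E - 1)| = 2 * E * |E - 1| := by
      rw [abs_mul, abs_of_pos (by positivity : (0:ℝ) < 2 * E)]
    rw [g2, abs_div, ← hE, habs, hnum, div_le_div_iff₀ hD2 h1z2]
    rcases le_or_gt (|z|) 1 with h1 | h1
    · -- |z| ≤ 1
      have ha : |E - 1| ≤ 2 * |z| := Real.abs_exp_sub_one_le h1
      have hE3 : E ≤ 3 := by
        calc E = Real.exp z := hE
          _ ≤ Real.exp 1 := Real.exp_le_exp.mpr (le_trans (le_abs_self z) h1)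
          _ ≤ 3 := by linarith [Real.exp_one_lt_d9]
      have hz1 : z ^ 2 ≤ 1 := by nlinarith [sq_abs z, abs_nonneg z]
      have h12 : 2 * E * |E - 1| ≤ 12 * |z| := by
        calc 2 * E * |E - 1| ≤ 2 * E * (2 * |z|) :=
              mul_le_mul_of_nonneg_left ha (by positivity)
          _ ≤ 12 * |z| := by nlinarith [abs_nonneg z]
      have hp := mul_le_mul h12 (by linarith : 1 + z ^ 2 ≤ 2) h1z2.le (by positivity)
      nlinarith [mul_nonneg hzabs.le (by linarith : (0:ℝ) ≤ (E + 1) ^ 3 - 1)]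
    · rcases le_or_gt 0 z with hzpos | hzneg
      · -- z > 1
        have h1z : 1 < z := by rwa [abs_of_nonneg hzpos] at h1
        have hzE : z ≤ E := by linarith [Real.add_one_le_exp z]
        have hE1 : (1:ℝ) ≤ E := by linarith
        have habsz : |z| = z := abs_of_nonneg hzpos
        have hN : 2 * E * |E - 1| ≤ 2 * E ^ 2 := by
          rw [abs_of_nonneg (by linarith : (0:ℝ) ≤ E - 1)]
          nlinarith
        have hp := mul_le_mul hN (by nlinarith : 1 + z ^ 2 ≤ 2 * z ^ 2) h1z2.le
          (by positivity)
        have hc3 : E ^ 3 ≤ (E + 1) ^ 3 :=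
          pow_le_pow_left₀ hEpos.le (by linarith) 3
        have h64 : 64 * z * E ^ 3 ≤ 64 * z * (E + 1) ^ 3 :=
          mul_le_mul_of_nonneg_left hc3 (by positivity)
        have hE3z : z * E ^ 2 ≤ E ^ 3 := by nlinarith [sq_nonneg E, hEpos]
        have h64' : 64 * z * (z * E ^ 2) ≤ 64 * z * E ^ 3 :=
          mul_le_mul_of_nonneg_left hE3z (by positivity)
        rw [habsz]
        nlinarith [mul_nonneg (mul_nonneg hzpos hzpos) (mul_nonneg hEpos.le hEpos.le)]
      · -- z < -1
        have hw1 : 1 < -z := by rwa [abs_of_neg hzneg] at h1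
        have hexpw : (-z) + 1 ≤ Real.exp (-z) := Real.add_one_le_exp _
        have hEinv : Real.exp (-z) = E⁻¹ := Real.exp_neg z
        have hwE : (-z) * E ≤ 1 := by
          have : (-z) * E ≤ Real.exp (-z) * E := by nlinarith [hEpos]
          rw [hEinv, inv_mul_cancel₀ hEpos.ne'] at this
          linarith
        have hEle1 : E ≤ 1 := by
          rw [hE]
          calc Real.exp z ≤ Real.exp 0 := Real.exp_le_exp.mpr (by linarith)
            _ = 1 := Real.exp_zero
        have habsz : |z| = -z := abs_of_neg hzneg
        have hN : 2 * E * |E - 1| ≤ 2 * E := by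
          rw [abs_of_nonpos (by linarith : E - 1 ≤ 0)]
          nlinarith
        have hp := mul_le_mul hN (by nlinarith : 1 + z ^ 2 ≤ 2 * z ^ 2) h1z2.le
          (by positivity)
        have hw2E : (-z) * ((-z) * E) ≤ (-z) * 1 :=
          mul_le_mul_of_nonneg_left hwE (by linarith)
        rw [habsz]
        nlinarith [mul_nonneg (by linarith : (0:ℝ) ≤ -z) (by linarith : (0:ℝ) ≤ (E + 1) ^ 3 - 1)]
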